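/- Let A be a 4th order 3-dimensional symmetric tensor satisfying: all of a₁₁₁₁, a₂₂₂₂, a₃₃₃₃, a₁₁₂₃, a₁₂₂₃, a₁₂₃₃ are ≥ 0; η₁ = 2a₁₁₁₂ + (a₁₁₁₁³a₂₂₂₂)^(1/4) ≥ 0, μ₁ = 2a₁₂₂₂ + (a₁₁₁₁a₂₂₂₂³)^(1/4) ≥ 0, η₂ = 2a₁₁₁₃ + (a₁₁₁₁³a₃₃₃₃)^(1/4) ≥ 0, μ₂ = 2a₁₃₃₃ + (a₁₁₁₁a₃₃₃₃³)^(1/4) ≥ 0, η₃ = 2a₂₂₂₃ + (a₂₂₂₂³a₃₃₃₃)^(1/4) ≥ 0, μ₃ = 2a₂₃₃₃ + (a₂₂₂₂a₃₃₃₃³)^(1/4) ≥ 0; and 3(2a₁₁₂₂ − √(a₁₁₁₁a₂₂₂₂)) + 4√(η₁μ₁) ≥ 0, 3(2a₁₁₃₃ − √(a₁₁₁₁a₃₃₃₃)) + 4√(η₂μ₂) ≥ 0, 3(2a₂₂₃₃ − √(a₂₂₂₂a₃₃₃₃)) + 4√(η₃μ₃) ≥ 0. Then A is copositive. -/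

import Mathlib

/-!
Twice the ternary form is the sum of the three binary quartics
`aᵢᵢᵢᵢ xᵢ⁴ + 8 aᵢᵢᵢⱼ xᵢ³xⱼ + 12 aᵢᵢⱼⱼ xᵢ²xⱼ² + 8 aᵢⱼⱼⱼ xᵢxⱼ³ + aⱼⱼⱼⱼ xⱼ⁴` and of the terms
`24 aᵢᵢⱼₖ xᵢ²xⱼxₖ`, which are nonnegative on the orthant. For a binary quartic
`p⁴x⁴ + 4b₁x³y + 6b₂x²y² + 4b₃xy³ + q⁴y⁴` one subtracts `(px - qy)⁴` and is left with
`4xy(ηx² + μy²) + 6(b₂ - p²q²)x²y²`, where `η = b₁ + p³q`, `μ = b₃ + pq³`; by AM-GM,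
`ηx² + μy² ≥ 2√(ημ) xy`, so the remainder is at least `2x²y²(3(b₂ - p²q²) + 4√(ημ)) ≥ 0`.
-/

open Real

theorem two_mul_sqrt_mul_mul_le_add {η μ : ℝ} (hη : 0 ≤ η) (hμ : 0 ≤ μ) (x y : ℝ) :
    2 * √(η * μ) * (x * y) ≤ η * x ^ 2 + μ * y ^ 2 := by
  have h := two_mul_le_add_sq (√η * x) (√μ * y)
  rw [mul_pow, mul_pow, sq_sqrt hη, sq_sqrt hμ] at h
  rw [sqrt_mul hη]
  linarith

theorem binary_quartic_nonneg_of_fourth_powers {p q b₁ b₂ b₃ x y : ℝ}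
    (hη : 0 ≤ b₁ + p ^ 3 * q) (hμ : 0 ≤ b₃ + p * q ^ 3)
    (hθ : 0 ≤ 3 * (b₂ - p ^ 2 * q ^ 2) + 4 * √((b₁ + p ^ 3 * q) * (b₃ + p * q ^ 3)))
    (hx : 0 ≤ x) (hy : 0 ≤ y) :
    0 ≤ p ^ 4 * x ^ 4 + 4 * b₁ * x ^ 3 * y + 6 * b₂ * x ^ 2 * y ^ 2
        + 4 * b₃ * x * y ^ 3 + q ^ 4 * y ^ 4 := by
  set η := b₁ + p ^ 3 * q with hη_def
  set μ := b₃ + p * q ^ 3 with hμ_def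
  set t := √(η * μ)
  have key : p ^ 4 * x ^ 4 + 4 * b₁ * x ^ 3 * y + 6 * b₂ * x ^ 2 * y ^ 2
        + 4 * b₃ * x * y ^ 3 + q ^ 4 * y ^ 4
      = (p * x - q * y) ^ 4 + 4 * (x * y) * (η * x ^ 2 + μ * y ^ 2 - 2 * t * (x * y))
        + (3 * (b₂ - p ^ 2 * q ^ 2) + 4 * t) * (2 * x ^ 2 * y ^ 2) := by
    rw [hη_def, hμ_def]; ring
  have hamgm := two_mul_sqrt_mul_mul_le_add hη hμ x y
  have hmid : 0 ≤ 4 * (x * y) * (η * x ^ 2 + μ * y ^ 2 - 2 * t * (x * y)) :=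
    mul_nonneg (by positivity) (by linarith)
  have hlast : 0 ≤ (3 * (b₂ - p ^ 2 * q ^ 2) + 4 * t) * (2 * x ^ 2 * y ^ 2) :=
    mul_nonneg hθ (by positivity)
  rw [key]
  positivity

theorem rpow_one_div_four_pow_four {a : ℝ} (ha : 0 ≤ a) : (a ^ ((1 : ℝ) / 4)) ^ 4 = a := by
  rw [← rpow_natCast, ← rpow_mul ha]
  norm_num

theorem binary_quartic_nonneg {b₀ b₁ b₂ b₃ b₄ x y : ℝ} (h₀ : 0 ≤ b₀) (h₄ : 0 ≤ b₄)
    (hη : 0 ≤ b₁ + (b₀ ^ 3 * b₄) ^ ((1 : ℝ) / 4))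
    (hμ : 0 ≤ b₃ + (b₀ * b₄ ^ 3) ^ ((1 : ℝ) / 4))
    (hθ : 0 ≤ 3 * (b₂ - √(b₀ * b₄))
        + 4 * √((b₁ + (b₀ ^ 3 * b₄) ^ ((1 : ℝ) / 4)) * (b₃ + (b₀ * b₄ ^ 3) ^ ((1 : ℝ) / 4))))
    (hx : 0 ≤ x) (hy : 0 ≤ y) :
    0 ≤ b₀ * x ^ 4 + 4 * b₁ * x ^ 3 * y + 6 * b₂ * x ^ 2 * y ^ 2
        + 4 * b₃ * x * y ^ 3 + b₄ * y ^ 4 := by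
  set p := b₀ ^ ((1 : ℝ) / 4)
  set q := b₄ ^ ((1 : ℝ) / 4)
  have hp4 : p ^ 4 = b₀ := rpow_one_div_four_pow_four h₀
  have hq4 : q ^ 4 = b₄ := rpow_one_div_four_pow_four h₄
  rw [mul_rpow (by positivity) h₄, ← rpow_pow_comm h₀] at hη hθ
  rw [mul_rpow h₀ (by positivity), ← rpow_pow_comm h₄] at hμ hθ
  rw [show b₀ * b₄ = (p ^ 2 * q ^ 2) ^ 2 by rw [← hp4, ← hq4]; ring,
    sqrt_sq (by positivity)] at hθ
  rw [← hp4, ← hq4]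
  exact binary_quartic_nonneg_of_fourth_powers hη hμ hθ hx hy

theorem copositive_dim3_sufficient
    (a1111 a2222 a3333 a1112 a1113 a1222 a1333 a2223 a2333
      a1122 a1133 a2233 a1123 a1223 a1233 : ℝ)
    (h1 : 0 ≤ a1111) (h2 : 0 ≤ a2222) (h3 : 0 ≤ a3333)
    (h4 : 0 ≤ a1123) (h5 : 0 ≤ a1223) (h6 : 0 ≤ a1233)
    (hη1 : 0 ≤ 2 * a1112 + (a1111 ^ 3 * a2222) ^ ((1:ℝ)/4))
    (hμ1 : 0 ≤ 2 * a1222 + (a1111 * a2222 ^ 3) ^ ((1:ℝ)/4))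
    (hη2 : 0 ≤ 2 * a1113 + (a1111 ^ 3 * a3333) ^ ((1:ℝ)/4))
    (hμ2 : 0 ≤ 2 * a1333 + (a1111 * a3333 ^ 3) ^ ((1:ℝ)/4))
    (hη3 : 0 ≤ 2 * a2223 + (a2222 ^ 3 * a3333) ^ ((1:ℝ)/4))
    (hμ3 : 0 ≤ 2 * a2333 + (a2222 * a3333 ^ 3) ^ ((1:ℝ)/4))
    (hθ1 : 0 ≤ 3 * (2 * a1122 - Real.sqrt (a1111 * a2222))
        + 4 * Real.sqrt ((2 * a1112 + (a1111 ^ 3 * a2222) ^ ((1:ℝ)/4))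
            * (2 * a1222 + (a1111 * a2222 ^ 3) ^ ((1:ℝ)/4))))
    (hθ2 : 0 ≤ 3 * (2 * a1133 - Real.sqrt (a1111 * a3333))
        + 4 * Real.sqrt ((2 * a1113 + (a1111 ^ 3 * a3333) ^ ((1:ℝ)/4))
            * (2 * a1333 + (a1111 * a3333 ^ 3) ^ ((1:ℝ)/4))))
    (hθ3 : 0 ≤ 3 * (2 * a2233 - Real.sqrt (a2222 * a3333))
        + 4 * Real.sqrt ((2 * a2223 + (a2222 ^ 3 * a3333) ^ ((1:ℝ)/4))
            * (2 * a2333 + (a2222 * a3333 ^ 3) ^ ((1:ℝ)/4)))) :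
    ∀ x1 x2 x3 : ℝ, 0 ≤ x1 → 0 ≤ x2 → 0 ≤ x3 →
      0 ≤ a1111 * x1 ^ 4 + a2222 * x2 ^ 4 + a3333 * x3 ^ 4
          + 4 * a1112 * x1 ^ 3 * x2 + 4 * a1222 * x1 * x2 ^ 3
          + 4 * a1113 * x1 ^ 3 * x3 + 4 * a1333 * x1 * x3 ^ 3
          + 4 * a2223 * x2 ^ 3 * x3 + 4 * a2333 * x2 * x3 ^ 3
          + 6 * a1122 * x1 ^ 2 * x2 ^ 2 + 6 * a1133 * x1 ^ 2 * x3 ^ 2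
          + 6 * a2233 * x2 ^ 2 * x3 ^ 2
          + 12 * a1123 * x1 ^ 2 * x2 * x3 + 12 * a1223 * x1 * x2 ^ 2 * x3
          + 12 * a1233 * x1 * x2 * x3 ^ 2 := by
  intro x1 x2 x3 hx1 hx2 hx3
  have h12 := binary_quartic_nonneg h1 h2 hη1 hμ1 hθ1 hx1 hx2
  have h13 := binary_quartic_nonneg h1 h3 hη2 hμ2 hθ2 hx1 hx3
  have h23 := binary_quartic_nonneg h2 h3 hη3 hμ3 hθ3 hx2 hx3
  have hcross : 0 ≤ 12 * a1123 * x1 ^ 2 * x2 * x3 + 12 * a1223 * x1 * x2 ^ 2 * x3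
      + 12 * a1233 * x1 * x2 * x3 ^ 2 := by positivity
  linarith
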